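/- Under the hypotheses of the Eisenstein-series formula (r continuous positive with absolutely convergent Fourier series of r^{2s}), only Fourier coefficients with index divisible by 4 contribute: Z_r(s) = Σ_{q∈ℤ} r̂^{2s}(4q) · Σ_{(m,n)≠(0,0)} e^{4iqθ(m,n)}/(m²+n²)^s for Re(s) > 1. -/

import Mathlib

/-- The polar angle of the lattice point `(m, n)`. -/
noncomputable def latAngle (p : ℤ × ℤ) : ℝ :=
  Complex.arg ((p.1 : ℂ) + (p.2 : ℂ) * Complex.I)

/-- The Hlawka zeta function `Z_r(s) = Σ_{(m,n)≠(0,0)} r(θ(m,n))^{2s}/(m²+n²)^s`. -/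
noncomputable def hlawkaZeta (r : ℝ → ℝ) (s : ℂ) : ℂ :=
  ∑' p : {p : ℤ × ℤ // p ≠ 0},
    ((r (latAngle p.1) : ℂ)) ^ (2 * s) /
      (((p.1.1 : ℂ)) ^ 2 + ((p.1.2 : ℂ)) ^ 2) ^ s

/-- The `q`-th Fourier coefficient of `θ ↦ r(θ)^{2s}`. -/
noncomputable def fourierCoeff2s (r : ℝ → ℝ) (s : ℂ) (q : ℤ) : ℂ :=
  (1 / (2 * (Real.pi : ℂ))) *
    ∫ θ in (0 : ℝ)..(2 * Real.pi),
      ((r θ : ℂ)) ^ (2 * s) * Complex.exp (-(q : ℂ) * (θ : ℂ) * Complex.I)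

/-!
Expanding `r(θ)^{2s}` in its Fourier series turns `Z_r(s)` into a double series over Fourier
indices `q` and nonzero lattice points, which converges absolutely for `Re s > 1` because
`|e^{iqθ}| = 1` and `Σ (m² + n²)^{-Re s} < ∞`. Summing over lattice points first produces the twisted
lattice sums `Σ e^{iqθ(m,n)} / (m² + n²)^s`. The rotation `(m, n) ↦ (-n, m)` permutes the nonzero
lattice points, preserves `m² + n²` and shifts `θ` by `π/2`, so it multiplies the twisted sum by
`i^q`; hence that sum vanishes unless `4 ∣ q`.
-/

open Complex

lemma tsum_tsum_mul_comm_of_norm_le {ι κ R : Type*} [NormedRing R] [CompleteSpace R]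
    {a : ι → R} {g : ι → κ → R} {b : κ → ℝ} (ha : Summable fun i => ‖a i‖) (hb : Summable b)
    (hg : ∀ i k, ‖g i k‖ ≤ b k) :
    ∑' k, ∑' i, a i * g i k = ∑' i, a i * ∑' k, g i k := by
  have hprod : Summable (Function.uncurry fun i k => a i * g i k) := by
    refine Summable.of_norm_bounded (ha.mul_of_nonneg hb.abs (fun _ => norm_nonneg _)
      (fun _ => abs_nonneg _)) fun x => ?_
    calc ‖a x.1 * g x.1 x.2‖ ≤ ‖a x.1‖ * ‖g x.1 x.2‖ := norm_mul_le _ _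
      _ ≤ ‖a x.1‖ * |b x.2| := by gcongr; exact (hg _ _).trans (le_abs_self _)
  rw [hprod.tsum_comm]
  exact tsum_congr fun i => Summable.tsum_mul_left _
    (.of_norm_bounded hb fun k => hg i k)

lemma tsum_comp_mul_eq_of_not_dvd {α : Type*} [AddCommMonoid α] [TopologicalSpace α]
    {k : ℤ} (hk : k ≠ 0) {f : ℤ → α} (hf : ∀ q, ¬ k ∣ q → f q = 0) :
    ∑' q, f (k * q) = ∑' q, f q :=
  (mul_right_injective₀ hk).tsum_eq fun q hq => by
    by_contra hq'
    exact hq (hf q fun ⟨m, hm⟩ => hq' ⟨m, hm.symm⟩)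

lemma tsum_eq_zero_of_comp_equiv_eq_mul {α K : Type*} [DivisionRing K] [TopologicalSpace K]
    [IsTopologicalRing K] [T2Space K] {f : α → K} (e : α ≃ α) {c : K} (hc : c ≠ 1)
    (h : ∀ a, f (e a) = c * f a) : ∑' a, f a = 0 := by
  have h_inv : c * ∑' a, f a = ∑' a, f a := by
    rw [← tsum_mul_left, ← tsum_congr h, e.tsum_eq f]
  have : (c - 1) * ∑' a, f a = 0 := by rw [sub_mul, h_inv, one_mul, sub_self]
  exact (mul_eq_zero.mp this).resolve_left (sub_ne_zero.mpr hc)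

lemma Complex.I_zpow_ne_one {q : ℤ} (hq : ¬ 4 ∣ q) : I ^ q ≠ 1 := by
  rw [I_zpow_eq_zpow_mod]
  have hmod : q % 4 = 1 ∨ q % 4 = 2 ∨ q % 4 = 3 := by omega
  rcases hmod with h | h | h <;> rw [h] <;> norm_num [zpow_ofNat, pow_succ, Complex.ext_iff]

lemma Complex.exp_int_mul_arg_mul_I (q : ℤ) {v : ℂ} (hv : v ≠ 0) :
    exp (q * arg v * I) = (v / ‖v‖) ^ q := by
  rw [mul_assoc, exp_int_mul]
  congr 1
  rw [eq_div_iff (by simpa using hv), mul_comm, norm_mul_exp_arg_mul_I]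

def latticePoint (p : ℤ × ℤ) : ℂ := p.1 + p.2 * I

lemma latAngle_eq_arg_latticePoint (p : ℤ × ℤ) : latAngle p = arg (latticePoint p) := rfl

lemma latticePoint_ne_zero {p : ℤ × ℤ} (hp : p ≠ 0) : latticePoint p ≠ 0 := by
  contrapose! hp
  simpa [latticePoint, Complex.ext_iff, Prod.ext_iff] using hp

lemma latticePoint_rotate (p : ℤ × ℤ) : latticePoint (-p.2, p.1) = I * latticePoint p := by
  simp [latticePoint, Complex.ext_iff]

lemma exp_int_mul_latAngle_rotate (q : ℤ) {p : ℤ × ℤ} (hp : p ≠ 0) :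
    exp (q * latAngle (-p.2, p.1) * I) = I ^ q * exp (q * latAngle p * I) := by
  have hz := latticePoint_ne_zero hp
  have hz' : latticePoint (-p.2, p.1) ≠ 0 :=
    latticePoint_ne_zero (by simpa [Prod.ext_iff, and_comm] using hp)
  rw [latAngle_eq_arg_latticePoint, latAngle_eq_arg_latticePoint, exp_int_mul_arg_mul_I q hz',
    exp_int_mul_arg_mul_I q hz, latticePoint_rotate, norm_mul, norm_I, one_mul, mul_div_assoc,
    mul_zpow]

def latticeRotation : {p : ℤ × ℤ // p ≠ 0} ≃ {p : ℤ × ℤ // p ≠ 0} :=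
  Equiv.subtypeEquiv ⟨fun p => (-p.2, p.1), fun p => (p.2, -p.1), fun _ => by simp,
    fun _ => by simp⟩ fun p => by simp [Prod.ext_iff, and_comm]

noncomputable def twistedTerm (s : ℂ) (q : ℤ) (p : {p : ℤ × ℤ // p ≠ 0}) : ℂ :=
  exp (q * latAngle p.1 * I) / ((p.1.1 : ℂ) ^ 2 + (p.1.2 : ℂ) ^ 2) ^ s

noncomputable def twistedLatticeSum (s : ℂ) (q : ℤ) : ℂ := ∑' p, twistedTerm s q p

lemma twistedTerm_latticeRotation (s : ℂ) (q : ℤ) (p : {p : ℤ × ℤ // p ≠ 0}) :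
    twistedTerm s q (latticeRotation p) = I ^ q * twistedTerm s q p := by
  simp only [twistedTerm, latticeRotation, Equiv.subtypeEquiv_apply, Equiv.coe_fn_mk,
    exp_int_mul_latAngle_rotate q p.2, mul_div_assoc]
  push_cast
  ring_nf

lemma twistedLatticeSum_eq_zero (s : ℂ) {q : ℤ} (hq : ¬ 4 ∣ q) : twistedLatticeSum s q = 0 :=
  tsum_eq_zero_of_comp_equiv_eq_mul latticeRotation (I_zpow_ne_one hq)
    (twistedTerm_latticeRotation s q)

lemma sq_add_sq_pos {p : ℤ × ℤ} (hp : p ≠ 0) : 0 < (p.1 : ℝ) ^ 2 + (p.2 : ℝ) ^ 2 := by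
  have hcoord : (p.1 : ℝ) ≠ 0 ∨ (p.2 : ℝ) ≠ 0 := by
    contrapose! hp
    exact Prod.ext (by exact_mod_cast hp.1) (by exact_mod_cast hp.2)
  rcases hcoord with h | h <;> positivity

lemma norm_sq_le_sq_add_sq (p : ℤ × ℤ) :
    ‖p‖ ^ 2 ≤ (p.1 : ℝ) ^ 2 + (p.2 : ℝ) ^ 2 := by
  rw [Prod.norm_def, Int.norm_eq_abs, Int.norm_eq_abs]
  rcases max_cases |(p.1 : ℝ)| |(p.2 : ℝ)| with ⟨h, _⟩ | ⟨h, _⟩ <;> rw [h, sq_abs] <;>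
    nlinarith [sq_nonneg (p.1 : ℝ), sq_nonneg (p.2 : ℝ)]

lemma summable_sq_add_sq_rpow_neg {σ : ℝ} (hσ : 1 < σ) :
    Summable fun p : {p : ℤ × ℤ // p ≠ 0} =>
      ((p.1.1 : ℝ) ^ 2 + (p.1.2 : ℝ) ^ 2) ^ (-σ) := by
  have hnorm : Summable fun p : ℤ × ℤ => ‖p‖ ^ (-(2 * σ)) := by
    refine ((finTwoArrowEquiv ℤ).symm.summable_iff.mpr
      (EisensteinSeries.summable_one_div_norm_rpow (k := 2 * σ) (by linarith))).congr
      fun x => ?_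
    simp [EisensteinSeries.norm_eq_max_natAbs, Prod.norm_def, Int.norm_eq_abs]
  refine (hnorm.subtype _).of_nonneg_of_le (fun p => by positivity) fun p => ?_
  have hp : 0 < ‖p.1‖ := norm_pos_iff.mpr p.2
  calc ((p.1.1 : ℝ) ^ 2 + (p.1.2 : ℝ) ^ 2) ^ (-σ) ≤ (‖p.1‖ ^ 2) ^ (-σ) :=
        Real.rpow_le_rpow_of_nonpos (by positivity) (norm_sq_le_sq_add_sq p.1) (by linarith)
    _ = ‖p.1‖ ^ (-(2 * σ)) := by
        rw [← Real.rpow_natCast, ← Real.rpow_mul hp.le]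
        norm_num

lemma norm_twistedTerm (s : ℂ) (q : ℤ) (p : {p : ℤ × ℤ // p ≠ 0}) :
    ‖twistedTerm s q p‖ = ((p.1.1 : ℝ) ^ 2 + (p.1.2 : ℝ) ^ 2) ^ (-s.re) := by
  have hN := sq_add_sq_pos p.2
  have hden : (p.1.1 : ℂ) ^ 2 + (p.1.2 : ℂ) ^ 2 =
      (((p.1.1 : ℝ) ^ 2 + (p.1.2 : ℝ) ^ 2 : ℝ) : ℂ) := by
    push_cast; ring
  have hnum : (q : ℂ) * latAngle p.1 * I = ((q * latAngle p.1 : ℝ) : ℂ) * I := by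
    push_cast; ring
  rw [twistedTerm, norm_div, hden, hnum, norm_exp_ofReal_mul_I,
    norm_cpow_eq_rpow_re_of_pos hN, Real.rpow_neg hN.le, one_div]

lemma hlawkaZeta_eq_tsum_fourierCoeff2s_mul (r : ℝ → ℝ) {s : ℂ} (hs : 1 < s.re)
    (habs : Summable fun q : ℤ => ‖fourierCoeff2s r s q‖)
    (hfour : ∀ θ : ℝ, HasSum (fun q : ℤ => fourierCoeff2s r s q * exp (q * θ * I))
      ((r θ : ℂ) ^ (2 * s))) :
    hlawkaZeta r s = ∑' q, fourierCoeff2s r s q * twistedLatticeSum s q := by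
  have hexpand : hlawkaZeta r s = ∑' p, ∑' q, fourierCoeff2s r s q * twistedTerm s q p :=
    tsum_congr fun p => by
      simp only [twistedTerm, ← mul_div_assoc]
      exact ((hfour (latAngle p.1)).div_const _).tsum_eq.symm
  rw [hexpand]
  exact tsum_tsum_mul_comm_of_norm_le habs (summable_sq_add_sq_rpow_neg hs)
    fun q p => (norm_twistedTerm s q p).le

theorem stmt_11_general (r : ℝ → ℝ)
    (habs : ∀ s : ℂ, 1 < s.re → Summable (fun q : ℤ => ‖fourierCoeff2s r s q‖))
    (hfour : ∀ s : ℂ, 1 < s.re → ∀ θ : ℝ,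
      HasSum (fun q : ℤ =>
        fourierCoeff2s r s q * Complex.exp ((q : ℂ) * (θ : ℂ) * Complex.I))
        (((r θ : ℂ)) ^ (2 * s)))
    (s : ℂ) (hs : 1 < s.re) :
    hlawkaZeta r s =
      ∑' q : ℤ, fourierCoeff2s r s (4 * q) *
        ∑' p : {p : ℤ × ℤ // p ≠ 0},
          Complex.exp ((4 * q : ℂ) * (latAngle p.1 : ℂ) * Complex.I) /
            (((p.1.1 : ℂ)) ^ 2 + ((p.1.2 : ℂ)) ^ 2) ^ s := by
  rw [hlawkaZeta_eq_tsum_fourierCoeff2s_mul r hs (habs s hs) (hfour s hs),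
    ← tsum_comp_mul_eq_of_not_dvd four_ne_zero fun q hq => by
      rw [twistedLatticeSum_eq_zero s hq, mul_zero]]
  simp only [twistedLatticeSum, twistedTerm, Int.cast_mul, Int.cast_ofNat]

/-- Eisenstein series formula (simplified version): only Fourier coefficients
with index divisible by 4 contribute, i.e.
`Z_r(s) = Σ_q r̂^{2s}(4q) · Σ_{(m,n)≠(0,0)} e^{4iqθ(m,n)}/(m²+n²)^s`
for `Re(s) > 1`. -/
theorem stmt_11 (r : ℝ → ℝ) (hr : Continuous r)
    (hper : Function.Periodic r (2 * Real.pi)) (hpos : ∀ θ, 0 < r θ)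
    (habs : ∀ s : ℂ, 1 < s.re → Summable (fun q : ℤ => ‖fourierCoeff2s r s q‖))
    (hfour : ∀ s : ℂ, 1 < s.re → ∀ θ : ℝ,
      HasSum (fun q : ℤ =>
        fourierCoeff2s r s q * Complex.exp ((q : ℂ) * (θ : ℂ) * Complex.I))
        (((r θ : ℂ)) ^ (2 * s)))
    (s : ℂ) (hs : 1 < s.re) :
    hlawkaZeta r s =
      ∑' q : ℤ, fourierCoeff2s r s (4 * q) *
        ∑' p : {p : ℤ × ℤ // p ≠ 0},
          Complex.exp ((4 * q : ℂ) * (latAngle p.1 : ℂ) * Complex.I) /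
            (((p.1.1 : ℂ)) ^ 2 + ((p.1.2 : ℂ)) ^ 2) ^ s :=
  stmt_11_general r habs hfour s hs
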